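/- Let M be a matroid on a finite ground set U, let L be a list enumerating every element of U exactly once (an arrival order), and for R ⊆ U define the greedy output A(R) ⊆ U as follows: starting from A = ∅, process the elements e of L in order, and add e to A whenever e ∈ R and A ∪ {e} is independent in M. Let x : U → [0,1] and let μ be the product probability measure on the powerset of U in which each subset R₀ ⊆ U has probability μ({R₀}) = ∏_{e∈R₀} x(e) · ∏_{e∈U\R₀} (1 − x(e)) (each element included independently with probability x(e)). Then for every e ∈ U, μ{ R ⊆ U : e ∈ A(R) } ≥ x(e) · (1 − μ{ R ⊆ U : e ∈ span(R \ {e}) }). -/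

import Mathlib

/-! If `e ∈ R` and `e` is not spanned by `R \ {e}`, greedy takes `e`: whatever it holds when `e`
arrives is an independent subset of `R \ {e}`, and augmentation lets `e` join it. The event
`e ∉ span (R \ {e})` depends only on `R \ {e}`, so under the product measure it is independent
of `e ∈ R`, which gives the bound. -/

open Classical

/-- A matroid on a finite ground set `α`, given by its independent sets. -/
structure FinMatroid (α : Type*) [DecidableEq α] [Fintype α] where
  /-- The independent sets. -/
  Indep : Finset α → Prop
  indep_empty : Indep ∅
  indep_subset : ∀ ⦃I J : Finset α⦄, Indep J → I ⊆ J → Indep I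
  indep_exchange : ∀ ⦃I J : Finset α⦄, Indep I → Indep J → I.card < J.card →
    ∃ e ∈ J, e ∉ I ∧ Indep (insert e I)

namespace FinMatroid

variable {α : Type*} [DecidableEq α] [Fintype α]

/-- A basis of the matroid: a maximal independent set. -/
def Base (M : FinMatroid α) (B : Finset α) : Prop :=
  M.Indep B ∧ ∀ e : α, e ∉ B → ¬ M.Indep (insert e B)

/-- The rank of a set: the size of a largest independent subset. -/
noncomputable def rank (M : FinMatroid α) (S : Finset α) : ℕ :=
  (S.powerset.filter M.Indep).sup Finset.card

/-- The span of a set: the elements whose insertion does not increase the rank. -/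
noncomputable def span (M : FinMatroid α) (S : Finset α) : Finset α :=
  Finset.univ.filter fun e => M.rank (insert e S) = M.rank S

end FinMatroid

namespace FinMatroid

variable {α : Type*} [DecidableEq α] [Fintype α]

/-- The greedy algorithm: process the elements of the list `L` in order, starting from
`∅`, and take an arriving element `e` whenever `e ∈ R` and this keeps the current set
independent. -/
noncomputable def greedy (M : FinMatroid α) (R : Finset α) (L : List α) : Finset α :=
  L.foldl (fun A e => if e ∈ R ∧ M.Indep (insert e A) then insert e A else A) ∅

end FinMatroid
namespace FinMatroid

variable {α : Type*} [DecidableEq α] [Fintype α] (M : FinMatroid α)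

lemma rank_mono {S T : Finset α} (h : S ⊆ T) : M.rank S ≤ M.rank T :=
  Finset.sup_mono (Finset.filter_subset_filter _ (Finset.powerset_mono.2 h))

lemma card_le_rank {I S : Finset α} (hI : M.Indep I) (hIS : I ⊆ S) : I.card ≤ M.rank S :=
  Finset.le_sup (Finset.mem_filter.2 ⟨Finset.mem_powerset.2 hIS, hI⟩)

lemma exists_indep_card_eq_rank (S : Finset α) :
    ∃ J ⊆ S, M.Indep J ∧ J.card = M.rank S := by
  obtain ⟨J, hJ, hJrank⟩ := Finset.exists_mem_eq_sup (S.powerset.filter M.Indep)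
    ⟨∅, Finset.mem_filter.2 ⟨Finset.empty_mem_powerset S, M.indep_empty⟩⟩ Finset.card
  rw [Finset.mem_filter, Finset.mem_powerset] at hJ
  exact ⟨J, hJ.1, hJ.2, hJrank.symm⟩

lemma exists_augment {A J : Finset α} (hA : M.Indep A) (hJ : M.Indep J) :
    ∃ B, M.Indep B ∧ A ⊆ B ∧ B ⊆ A ∪ J ∧ J.card ≤ B.card := by
  induction hn : J.card - A.card generalizing A with
  | zero => exact ⟨A, hA, subset_rfl, Finset.subset_union_left, by omega⟩
  | succ n ih =>
    obtain ⟨f, hfJ, hfA, hfI⟩ := M.indep_exchange hA hJ (by omega)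
    obtain ⟨B, hB, hAB, hBJ, hcard⟩ :=
      ih hfI (by rw [Finset.card_insert_of_notMem hfA]; omega)
    refine ⟨B, hB, (Finset.subset_insert f A).trans hAB, hBJ.trans ?_, hcard⟩
    rw [Finset.insert_union]
    exact Finset.insert_subset (Finset.mem_union_right _ hfJ) subset_rfl

lemma insert_indep_of_notMem_span {A S : Finset α} {e : α} (hA : M.Indep A) (hAS : A ⊆ S)
    (he : e ∉ M.span S) : M.Indep (insert e A) := by
  have hlt : M.rank S < M.rank (insert e S) :=
    lt_of_le_of_ne (M.rank_mono (Finset.subset_insert e S))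
      fun h => he (Finset.mem_filter.2 ⟨Finset.mem_univ e, h.symm⟩)
  obtain ⟨J, hJS, hJ, hJrank⟩ := M.exists_indep_card_eq_rank (insert e S)
  obtain ⟨B, hB, hAB, hBAJ, hcard⟩ := M.exists_augment hA hJ
  have heB : e ∈ B := by
    by_contra heB
    have hBS : B ⊆ S := fun g hg => by
      rcases Finset.mem_union.1 (hBAJ hg) with hgA | hgJ
      · exact hAS hgA
      · exact (Finset.mem_insert.1 (hJS hgJ)).resolve_left (by rintro rfl; exact heB hg)
    have := M.card_le_rank hB hBS
    omega
  exact M.indep_subset hB (Finset.insert_subset heB hAB)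

noncomputable def greedyStep (R A : Finset α) (e : α) : Finset α :=
  if e ∈ R ∧ M.Indep (insert e A) then insert e A else A

lemma greedy_eq_foldl (R : Finset α) (L : List α) :
    M.greedy R L = L.foldl (M.greedyStep R) ∅ := rfl

lemma subset_greedyStep (R A : Finset α) (a : α) : A ⊆ M.greedyStep R A a := by
  unfold greedyStep
  split_ifs
  exacts [Finset.subset_insert a A, subset_rfl]

lemma indep_greedyStep {R A : Finset α} (hA : M.Indep A) (a : α) :
    M.Indep (M.greedyStep R A a) := by
  unfold greedyStep
  split_ifs with h
  exacts [h.2, hA]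

lemma greedyStep_subset {R A T : Finset α} {a : α} (hA : A ⊆ T) (ha : a ∈ R → a ∈ T) :
    M.greedyStep R A a ⊆ T := by
  unfold greedyStep
  split_ifs with h
  exacts [Finset.insert_subset (ha h.1) hA, hA]

lemma subset_foldl_greedyStep (R : Finset α) (L : List α) (A : Finset α) :
    A ⊆ L.foldl (M.greedyStep R) A := by
  induction L generalizing A with
  | nil => exact subset_rfl
  | cons a L ih => exact (M.subset_greedyStep R A a).trans (ih _)

lemma mem_foldl_greedyStep_of_notMem_span {R A : Finset α} {e : α} {L : List α}
    (hA : M.Indep A) (hAR : A ⊆ R.erase e) (heR : e ∈ R) (he : e ∉ M.span (R.erase e))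
    (heL : e ∈ L) : e ∈ L.foldl (M.greedyStep R) A := by
  induction L generalizing A with
  | nil => simp at heL
  | cons a L ih =>
    rw [List.foldl_cons]
    by_cases hae : a = e
    · subst hae
      have hstep : M.greedyStep R A a = insert a A :=
        if_pos ⟨heR, M.insert_indep_of_notMem_span hA hAR he⟩
      exact M.subset_foldl_greedyStep R L _ (hstep ▸ Finset.mem_insert_self a A)
    · refine ih (M.indep_greedyStep hA a) (M.greedyStep_subset hAR ?_)
        ((List.mem_cons.1 heL).resolve_left (Ne.symm hae))
      exact fun haR => Finset.mem_erase.2 ⟨hae, haR⟩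

lemma mem_greedy_of_notMem_span {R : Finset α} {e : α} {L : List α} (heL : e ∈ L)
    (heR : e ∈ R) (he : e ∉ M.span (R.erase e)) : e ∈ M.greedy R L :=
  M.mem_foldl_greedyStep_of_notMem_span M.indep_empty (Finset.empty_subset _) heR he heL

end FinMatroid

section ProductMeasure

variable {α : Type*} [DecidableEq α] [Fintype α]

def productWeight (x : α → ℝ) (R : Finset α) : ℝ :=
  (∏ e ∈ R, x e) * ∏ e ∈ Rᶜ, (1 - x e)

lemma productWeight_nonneg {x : α → ℝ} (hx0 : ∀ e, 0 ≤ x e) (hx1 : ∀ e, x e ≤ 1)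
    (R : Finset α) : 0 ≤ productWeight x R :=
  mul_nonneg (Finset.prod_nonneg fun e _ => hx0 e)
    (Finset.prod_nonneg fun e _ => sub_nonneg.2 (hx1 e))

lemma sum_productWeight (x : α → ℝ) : ∑ R : Finset α, productWeight x R = 1 := by
  have h := Finset.prod_add x (fun e => 1 - x e) (Finset.univ : Finset α)
  simp only [add_sub_cancel, Finset.prod_const_one, Finset.powerset_univ] at h
  rw [h]
  simp [productWeight, Finset.compl_eq_univ_sdiff]

lemma productWeight_insert {x : α → ℝ} {S : Finset α} {e : α} (he : e ∉ S) :
    productWeight x (insert e S) = x e * (productWeight x S + productWeight x (insert e S)) := by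
  have hcompl : Sᶜ = insert e (insert e S)ᶜ := by
    rw [Finset.compl_insert, Finset.insert_erase (Finset.mem_compl.2 he)]
  simp only [productWeight, hcompl, Finset.prod_insert he,
    Finset.prod_insert (Finset.notMem_compl.2 (Finset.mem_insert_self e S))]
  ring

lemma Finset.sum_univ_eq_sum_powerset_erase {β : Type*} [AddCommMonoid β] (e : α)
    (f : Finset α → β) :
    ∑ R : Finset α, f R = ∑ S ∈ (univ.erase e).powerset, (f S + f (insert e S)) := by
  conv_lhs => rw [← powerset_univ, ← insert_erase (mem_univ e)]
  rw [sum_powerset_insert (notMem_erase e _), ← sum_add_distrib]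

/-- Independence of the event `e ∈ R` from any function of `R \ {e}`. -/
lemma sum_ite_mem_productWeight_mul (x : α → ℝ) (e : α) (g : Finset α → ℝ) :
    ∑ R : Finset α, (if e ∈ R then productWeight x R * g (R.erase e) else 0) =
      x e * ∑ R : Finset α, productWeight x R * g (R.erase e) := by
  rw [Finset.sum_univ_eq_sum_powerset_erase e, Finset.sum_univ_eq_sum_powerset_erase e,
    Finset.mul_sum]
  refine Finset.sum_congr rfl fun S hS => ?_
  have he : e ∉ S := fun h => Finset.notMem_erase e _ (Finset.mem_powerset.1 hS h)
  rw [if_neg he, if_pos (Finset.mem_insert_self e S), Finset.erase_insert he,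
    Finset.erase_eq_of_notMem he]
  linear_combination g S * productWeight_insert (x := x) he

end ProductMeasure

theorem stmt_13_general {α : Type*} [DecidableEq α] [Fintype α] (M : FinMatroid α)
    (L : List α) (hall : ∀ x : α, x ∈ L)
    (x : α → ℝ) (hx0 : ∀ e : α, 0 ≤ x e) (hx1 : ∀ e : α, x e ≤ 1) :
    let μ : Finset α → ℝ := fun R => (∏ e ∈ R, x e) * ∏ e ∈ Rᶜ, (1 - x e)
    ∀ e : α,
      x e * (1 - ∑ R : Finset α, if e ∈ M.span (R.erase e) then μ R else 0) ≤
        ∑ R : Finset α, if e ∈ M.greedy R L then μ R else 0 := by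
  intro μ e
  change x e * (1 - ∑ R : Finset α, if e ∈ M.span (R.erase e) then productWeight x R else 0) ≤
    ∑ R : Finset α, if e ∈ M.greedy R L then productWeight x R else 0
  set notSpanned : Finset α → ℝ := fun S => if e ∈ M.span S then 0 else 1
  have hcompl : 1 - ∑ R : Finset α, (if e ∈ M.span (R.erase e) then productWeight x R else 0) =
      ∑ R : Finset α, productWeight x R * notSpanned (R.erase e) := by
    rw [← sum_productWeight x, ← Finset.sum_sub_distrib]
    refine Finset.sum_congr rfl fun R _ => ?_
    split_ifs <;> simp [notSpanned, *]
  rw [hcompl, ← sum_ite_mem_productWeight_mul]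
  refine Finset.sum_le_sum fun R _ => ?_
  by_cases heR : e ∈ R
  · by_cases hspan : e ∈ M.span (R.erase e)
    · simp only [notSpanned, heR, hspan, if_true, mul_zero]
      split_ifs
      exacts [productWeight_nonneg hx0 hx1 R, le_rfl]
    · simp [notSpanned, heR, hspan, M.mem_greedy_of_notMem_span (hall e) heR hspan]
  · rw [if_neg heR]
    split_ifs
    exacts [productWeight_nonneg hx0 hx1 R, le_rfl]

/-- Selectability of the greedy algorithm: if each element is active independently with
probability `x e`, then `Pr[e ∈ greedy(R)] ≥ x e · (1 - Pr[e ∈ span(R \ {e})])`. -/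
theorem stmt_13 {α : Type*} [DecidableEq α] [Fintype α] (M : FinMatroid α)
    (L : List α) (hnodup : L.Nodup) (hall : ∀ x : α, x ∈ L)
    (x : α → ℝ) (hx0 : ∀ e : α, 0 ≤ x e) (hx1 : ∀ e : α, x e ≤ 1) :
    let μ : Finset α → ℝ := fun R => (∏ e ∈ R, x e) * ∏ e ∈ Rᶜ, (1 - x e)
    ∀ e : α,
      x e * (1 - ∑ R : Finset α, if e ∈ M.span (R.erase e) then μ R else 0) ≤
        ∑ R : Finset α, if e ∈ M.greedy R L then μ R else 0 :=
  stmt_13_general M L hall x hx0 hx1
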